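/- arXiv:2203.00987 — 2 statements merged into one kernel-verified Lean document; each statement's English description precedes it below -/
import Mathlib

section
/- GAP sphere safeness: let u* ∈ Δ be the maximizer of D over Δ. Then for every x ∈ ℝ^n and every u ∈ Δ, one has ‖u* − u‖₂ ≤ √(2·gap(x,u)). -/
/-- Euclidean norm of a vector in ℝ^m. -/
noncomputable def norm2 {m : ℕ} (v : Fin m → ℝ) : ℝ := Real.sqrt (∑ i, v i ^ 2)

/-- ℓ1 norm of a vector in ℝ^n. -/
def norm1 {n : ℕ} (x : Fin n → ℝ) : ℝ := ∑ i, |x i|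

/-- Canonical inner product on ℝ^m. -/
def dot {m : ℕ} (a u : Fin m → ℝ) : ℝ := ∑ i, a i * u i

/-- Lasso primal objective P(x) = (1/2)‖y − Ax‖₂² + λ‖x‖₁. -/
noncomputable def Pobj {m n : ℕ} (A : Matrix (Fin m) (Fin n) ℝ) (y : Fin m → ℝ)
    (lam : ℝ) (x : Fin n → ℝ) : ℝ :=
  (1 / 2) * norm2 (y - A.mulVec x) ^ 2 + lam * norm1 x

/-- Lasso dual objective D(u) = (1/2)‖y‖₂² − (1/2)‖y − u‖₂². -/
noncomputable def Dobj {m : ℕ} (y u : Fin m → ℝ) : ℝ :=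
  (1 / 2) * norm2 y ^ 2 - (1 / 2) * norm2 (y - u) ^ 2

/-- Dual feasibility: u ∈ Δ iff |⟨a_i, u⟩| ≤ λ for every column a_i of A. -/
def feas {m n : ℕ} (A : Matrix (Fin m) (Fin n) ℝ) (lam : ℝ) (u : Fin m → ℝ) : Prop :=
  ∀ i : Fin n, |dot (fun j => A j i) u| ≤ lam

/-! Since `D(u) = ½‖y‖² - ½‖y - u‖²`, the dual maximizer `u*` is the nearest point to `y` in the
convex set `Δ`. The obtuse-angle criterion for this projection gives
`‖y - u‖² ≥ ‖y - u*‖² + ‖u* - u‖²`, i.e. `½‖u* - u‖² ≤ D(u*) - D(u)` on `Δ`, and weak duality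
`D(u*) ≤ P(x)` turns the right-hand side into a bound by the duality gap. -/

open WithLp Matrix
open scoped InnerProductSpace

section InnerProductSpace

variable {E : Type*} [NormedAddCommGroup E] [InnerProductSpace ℝ E]

theorem norm_sub_sq_add_norm_sub_sq_le_of_forall_norm_sub_le {K : Set E} (hK : Convex ℝ K)
    {y p w : E} (hp : p ∈ K) (hmin : ∀ v ∈ K, ‖y - p‖ ≤ ‖y - v‖) (hw : w ∈ K) :
    ‖y - p‖ ^ 2 + ‖p - w‖ ^ 2 ≤ ‖y - w‖ ^ 2 := by
  have : Nonempty K := ⟨⟨p, hp⟩⟩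
  have hinf : ‖y - p‖ = ⨅ v : K, ‖y - v‖ :=
    le_antisymm (le_ciInf fun v => hmin v v.2)
      (ciInf_le (f := fun v : K => ‖y - v‖) ⟨0, by rintro _ ⟨v, rfl⟩; positivity⟩ ⟨p, hp⟩)
  have hvar := (norm_eq_iInf_iff_real_inner_le_zero hK hp).1 hinf w hw
  have hexp : ‖y - w‖ ^ 2 = ‖(y - p) - (w - p)‖ ^ 2 := by congr 2; abel
  rw [hexp, norm_sub_sq_real (y - p), norm_sub_rev p w]
  linarith

theorem norm_sq_sub_norm_sub_sq_le (y z u : E) :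
    ‖y‖ ^ 2 - ‖y - u‖ ^ 2 ≤ ‖y - z‖ ^ 2 + 2 * ⟪z, u⟫_ℝ := by
  have hsq := sq_nonneg ‖y - z - u‖
  rw [norm_sub_sq_real (y - z) u, inner_sub_left] at hsq
  rw [norm_sub_sq_real y u]
  linarith

end InnerProductSpace

section Lasso

variable {m n : ℕ}

theorem norm2_eq_norm_toLp (v : Fin m → ℝ) : norm2 v = ‖toLp 2 v‖ := by
  simp [norm2, EuclideanSpace.norm_eq]

theorem Dobj_eq (y u : Fin m → ℝ) :
    Dobj y u = (‖toLp 2 y‖ ^ 2 - ‖toLp 2 y - toLp 2 u‖ ^ 2) / 2 := by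
  rw [Dobj, norm2_eq_norm_toLp, norm2_eq_norm_toLp, toLp_sub]
  ring

theorem feas_iff (A : Matrix (Fin m) (Fin n) ℝ) (lam : ℝ) (u : Fin m → ℝ) :
    feas A lam u ↔ ∀ i, |(u ᵥ* A) i| ≤ lam := by
  simp only [feas, dot, vecMul, dotProduct, mul_comm]

theorem convex_setOf_feas (A : Matrix (Fin m) (Fin n) ℝ) (lam : ℝ) :
    Convex ℝ {u | feas A lam u} := by
  have hset : {u | feas A lam u} = vecMulLinear A ⁻¹' Set.univ.pi fun _ => Set.Icc (-lam) lam := by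
    ext u
    simp only [Set.mem_ofPred_eq, feas_iff, Set.mem_preimage, Set.mem_univ_pi, Set.mem_Icc,
      vecMulLinear_apply, abs_le]
  rw [hset]
  exact (convex_pi fun _ _ => convex_Icc _ _).linear_preimage _

theorem dotProduct_le_mul_norm1 {v : Fin n → ℝ} {lam : ℝ} (hv : ∀ i, |v i| ≤ lam)
    (x : Fin n → ℝ) : v ⬝ᵥ x ≤ lam * norm1 x := by
  rw [norm1, Finset.mul_sum]
  refine Finset.sum_le_sum fun i _ => ?_
  calc v i * x i ≤ |v i| * |x i| := by rw [← abs_mul]; exact le_abs_self _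
    _ ≤ lam * |x i| := mul_le_mul_of_nonneg_right (hv i) (abs_nonneg _)

theorem Dobj_le_Pobj {A : Matrix (Fin m) (Fin n) ℝ} {lam : ℝ} {u : Fin m → ℝ}
    (hu : feas A lam u) (y : Fin m → ℝ) (x : Fin n → ℝ) : Dobj y u ≤ Pobj A y lam x := by
  have hpair : ⟪toLp 2 (A *ᵥ x), toLp 2 u⟫_ℝ ≤ lam * norm1 x := by
    rw [EuclideanSpace.inner_toLp_toLp, star_trivial, dotProduct_mulVec]
    exact dotProduct_le_mul_norm1 ((feas_iff A lam u).1 hu) x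
  have hsq := norm_sq_sub_norm_sub_sq_le (toLp 2 y) (toLp 2 (A *ᵥ x)) (toLp 2 u)
  rw [Dobj_eq, Pobj, norm2_eq_norm_toLp, toLp_sub]
  linarith

theorem norm2_sub_sq_le_two_mul_Dobj_sub {A : Matrix (Fin m) (Fin n) ℝ} {lam : ℝ}
    {y ustar u : Fin m → ℝ} (hfeas : feas A lam ustar)
    (hmax : ∀ v, feas A lam v → Dobj y v ≤ Dobj y ustar) (hu : feas A lam u) :
    norm2 (ustar - u) ^ 2 ≤ 2 * (Dobj y ustar - Dobj y u) := by
  set K : Set (EuclideanSpace ℝ (Fin m)) := ofLp ⁻¹' {v | feas A lam v}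
  have hK : Convex ℝ K :=
    (convex_setOf_feas A lam).linear_preimage (WithLp.linearEquiv 2 ℝ (Fin m → ℝ)).toLinearMap
  have hnearest : ∀ v ∈ K, ‖toLp 2 y - toLp 2 ustar‖ ≤ ‖toLp 2 y - v‖ := by
    intro v hv
    have hle := hmax _ hv
    rw [Dobj_eq, Dobj_eq, toLp_ofLp] at hle
    exact (sq_le_sq₀ (norm_nonneg _) (norm_nonneg _)).1 (by linarith)
  have hpyth := norm_sub_sq_add_norm_sub_sq_le_of_forall_norm_sub_le hK hfeas hnearest
    (w := toLp 2 u) hu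
  rw [Dobj_eq, Dobj_eq, norm2_eq_norm_toLp, toLp_sub]
  linarith

end Lasso

theorem gap_sphere_safe_general (m n : ℕ)
    (A : Matrix (Fin m) (Fin n) ℝ) (y : Fin m → ℝ) (lam : ℝ)
    (ustar : Fin m → ℝ) (hfeas : feas A lam ustar)
    (hmax : ∀ u : Fin m → ℝ, feas A lam u → Dobj y u ≤ Dobj y ustar) :
    ∀ (x : Fin n → ℝ) (u : Fin m → ℝ), feas A lam u →
      norm2 (ustar - u) ≤ Real.sqrt (2 * (Pobj A y lam x - Dobj y u)) := by
  intro x u hu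
  have hconcave := norm2_sub_sq_le_two_mul_Dobj_sub hfeas hmax hu
  have hweak := Dobj_le_Pobj hfeas y x
  exact Real.le_sqrt_of_sq_le (by linarith)

/-- GAP sphere safeness: the dual maximizer u* satisfies
‖u* − u‖₂ ≤ √(2·gap(x,u)) for every x ∈ ℝ^n and u ∈ Δ. -/
theorem gap_sphere_safe (m n : ℕ) (hm : 0 < m) (hn : 0 < n)
    (A : Matrix (Fin m) (Fin n) ℝ) (y : Fin m → ℝ) (lam : ℝ) (hlam : 0 < lam)
    (ustar : Fin m → ℝ) (hfeas : feas A lam ustar)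
    (hmax : ∀ u : Fin m → ℝ, feas A lam u → Dobj y u ≤ Dobj y ustar) :
    ∀ (x : Fin n → ℝ) (u : Fin m → ℝ), feas A lam u →
      norm2 (ustar - u) ≤ Real.sqrt (2 * (Pobj A y lam x - Dobj y u)) :=
  gap_sphere_safe_general m n A y lam ustar hfeas hmax
end

section
/- Dual-value bound on the Hölder half-space (inequality (25)): for every x ∈ ℝ^n and every u' ∈ ℝ^m satisfying ⟨A x, u'⟩ ≤ λ‖x‖₁, one has D(u') ≤ P(x). -/
lemma norm2_sq {m : ℕ} (v : Fin m → ℝ) : norm2 v ^ 2 = ∑ i, v i ^ 2 :=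
  Real.sq_sqrt (Finset.sum_nonneg fun i _ => sq_nonneg (v i))

lemma half_norm2_sq_sub_add_dot_sub_Dobj {m : ℕ} (y a u : Fin m → ℝ) :
    (1 / 2) * norm2 (y - a) ^ 2 + dot a u - Dobj y u = (1 / 2) * norm2 (a + u - y) ^ 2 := by
  simp only [Dobj, dot, norm2_sq, Pi.sub_apply, Pi.add_apply, Finset.mul_sum,
    ← Finset.sum_add_distrib, ← Finset.sum_sub_distrib]
  exact Finset.sum_congr rfl fun i _ => by ring

lemma Dobj_le_half_norm2_sq_sub_add_dot {m : ℕ} (y a u : Fin m → ℝ) :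
    Dobj y u ≤ (1 / 2) * norm2 (y - a) ^ 2 + dot a u := by
  linarith [half_norm2_sq_sub_add_dot_sub_Dobj y a u, sq_nonneg (norm2 (a + u - y))]

theorem dual_value_bound_holder_halfspace_general (m n : ℕ)
    (A : Matrix (Fin m) (Fin n) ℝ) (y : Fin m → ℝ) (lam : ℝ)
    (x : Fin n → ℝ) (u' : Fin m → ℝ)
    (h : dot (A.mulVec x) u' ≤ lam * norm1 x) :
    Dobj y u' ≤ Pobj A y lam x :=
  calc Dobj y u' ≤ (1 / 2) * norm2 (y - A.mulVec x) ^ 2 + dot (A.mulVec x) u' :=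
        Dobj_le_half_norm2_sq_sub_add_dot y (A.mulVec x) u'
    _ ≤ Pobj A y lam x := by rw [Pobj]; linarith

/-- inequality (25): if ⟨A x, u'⟩ ≤ λ‖x‖₁ then D(u') ≤ P(x). -/
theorem dual_value_bound_holder_halfspace (m n : ℕ) (hm : 0 < m) (hn : 0 < n)
    (A : Matrix (Fin m) (Fin n) ℝ) (y : Fin m → ℝ) (lam : ℝ) (hlam : 0 < lam)
    (x : Fin n → ℝ) (u' : Fin m → ℝ)
    (h : dot (A.mulVec x) u' ≤ lam * norm1 x) :
    Dobj y u' ≤ Pobj A y lam x :=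
  dual_value_bound_holder_halfspace_general m n A y lam x u' h
end
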